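/- Let P be a path v_0, v_1, ..., v_m in a graph G with an interval representation I, with I_{v_0} having the minimum left endpoint and I_{v_m} the maximum right endpoint over all of V. Define a subsequence s_1 = v_0, and given s_i with R_{s_i} < R_{v_m}, let s_{i+1} be the vertex after s_i on P maximizing R_{s_{i+1}} among those with I_{s_{i+1}} ∩ I_{s_i} ≠ ∅. Then this greedy selection is always well-defined (such a successor exists) and R_{s_1} < R_{s_2} < ... is strictly increasing. -/
import Mathlib

private lemma support_getElem_eq_getVert {V : Type*} {G : SimpleGraph V} {u v : V}
    (p : G.Walk u v) (i : ℕ) (hi : i < p.support.length) :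
    p.support[i]'hi = p.getVert i := by
  induction p generalizing i with
  | nil =>
    have : i = 0 := by simp only [SimpleGraph.Walk.support_nil, List.length_singleton] at hi; omega
    subst this; simp
  | cons h q ih =>
    cases i with
    | zero => simp
    | succ n =>
      simp only [SimpleGraph.Walk.support_cons, SimpleGraph.Walk.getVert_cons_succ]
      have hn : n < q.support.length := by
        simpa [SimpleGraph.Walk.support_cons] using hi
      simpa using ih n hn

/-- Greedy selection along a path in a graph with an interval representation.
Let `p` be a path from a vertex `v0` minimizing the left endpoint to a vertex `vm`
maximizing the right endpoint.  Then (1) every vertex on the path whose right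
endpoint is below the maximum has a strictly later vertex on the path whose interval
intersects its own (so the greedy successor is well-defined), and (2) any greedily
chosen successor (a later vertex with intersecting interval maximizing the right
endpoint among such) has strictly larger right endpoint. -/
theorem stmt_14 {V : Type*} [Fintype V] (G : SimpleGraph V) (L R : V → ℤ)
    (hLR : ∀ v, L v ≤ R v)
    (hadj : ∀ u v : V, G.Adj u v →
      (Set.Icc (L u) (R u) ∩ Set.Icc (L v) (R v)).Nonempty)
    {v0 vm : V} (p : G.Walk v0 vm) (hp : p.IsPath)
    (hmin : ∀ v : V, L v0 ≤ L v) (hmax : ∀ v : V, R v ≤ R vm) :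
    (∀ (i : ℕ) (hi : i < p.support.length),
        R (p.support[i]'hi) < R vm →
        ∃ (j : ℕ) (hj : j < p.support.length), i < j ∧
          (Set.Icc (L (p.support[i]'hi)) (R (p.support[i]'hi)) ∩
            Set.Icc (L (p.support[j]'hj)) (R (p.support[j]'hj))).Nonempty) ∧
    (∀ (i j : ℕ) (hi : i < p.support.length) (hj : j < p.support.length),
        i < j →
        R (p.support[i]'hi) < R vm →
        (Set.Icc (L (p.support[i]'hi)) (R (p.support[i]'hi)) ∩
          Set.Icc (L (p.support[j]'hj)) (R (p.support[j]'hj))).Nonempty →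
        (∀ (j' : ℕ) (hj' : j' < p.support.length), i < j' →
          (Set.Icc (L (p.support[i]'hi)) (R (p.support[i]'hi)) ∩
            Set.Icc (L (p.support[j']'hj')) (R (p.support[j']'hj'))).Nonempty →
          R (p.support[j']'hj') ≤ R (p.support[j]'hj)) →
        R (p.support[i]'hi) < R (p.support[j]'hj)) := by
  have hslen : p.support.length = p.length + 1 := SimpleGraph.Walk.length_support p
  have hge : ∀ (i : ℕ) (hi : i < p.support.length), p.support[i]'hi = p.getVert i :=
    support_getElem_eq_getVert p
  -- a vertex with R below max is not the last one
  have hlt : ∀ (i : ℕ), i < p.support.length → R (p.getVert i) < R vm → i < p.length := by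
    intro i hi hR
    rcases lt_or_eq_of_le (Nat.lt_succ_iff.mp (hslen ▸ hi)) with h | h
    · exact h
    · exfalso; rw [h, SimpleGraph.Walk.getVert_length] at hR; exact lt_irrefl _ hR
  constructor
  · intro i hi hR
    rw [hge i hi] at hR ⊢
    have hil : i < p.length := hlt i hi hR
    have hj : i + 1 < p.support.length := by omega
    refine ⟨i + 1, hj, Nat.lt_succ_self i, ?_⟩
    rw [hge (i+1) hj]
    exact hadj _ _ (p.adj_getVert_succ hil)
  · intro i j hi hj hij hR hint hmaxsel
    rw [hge i hi] at hR ⊢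
    rw [hge j hj]
    have hil : i < p.length := hlt i hi hR
    -- find minimal k > i with R (getVert k) > R (getVert i)
    have hQ : ∃ k, i < k ∧ k ≤ p.length ∧ R (p.getVert i) < R (p.getVert k) :=
      ⟨p.length, hil, le_refl _, by rwa [SimpleGraph.Walk.getVert_length]⟩
    classical
    set k := Nat.find hQ with hk
    obtain ⟨hik, hkl, hRk⟩ := Nat.find_spec hQ
    -- R (getVert (k-1)) ≤ R (getVert i)
    have hk1 : R (p.getVert (k - 1)) ≤ R (p.getVert i) := by
      rcases Nat.lt_or_ge i (k - 1) with h | h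
      · by_contra hc
        push_neg at hc
        exact Nat.find_min hQ (show k - 1 < k by omega) ⟨h, by omega, hc⟩
      · have : k - 1 = i := by omega
        rw [this]
    -- adjacency between k-1 and k
    have hadjk := p.adj_getVert_succ (show k - 1 < p.length by omega)
    rw [show k - 1 + 1 = k by omega] at hadjk
    obtain ⟨x, hx1, hx2⟩ := hadj _ _ hadjk
    have hLk : L (p.getVert k) ≤ R (p.getVert i) := le_trans hx2.1 (le_trans hx1.2 hk1)
    -- so intervals of i and k intersect at R (getVert i)
    have hkint : (Set.Icc (L (p.getVert i)) (R (p.getVert i)) ∩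
        Set.Icc (L (p.getVert k)) (R (p.getVert k))).Nonempty :=
      ⟨R (p.getVert i), ⟨hLR _, le_refl _⟩, ⟨hLk, le_of_lt hRk⟩⟩
    have hkslen : k < p.support.length := by omega
    have := hmaxsel k hkslen hik (by rwa [hge i hi, hge k hkslen])
    rw [hge j hj, hge k hkslen] at this
    exact lt_of_lt_of_le hRk this
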